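/- Assume a, b, c, d > 0 with a > d and b > c, so that ab > cd and x_∞ := ((b−c)/(ab−cd), (a−d)/(ab−cd)) ∈ (0,∞)². Then for every x₀ ∈ (0,∞)² and every ε > 0: lim_{r→∞} t₋(r,ε) = 0 and liminf_{r→∞} t₊(r,ε) > 0. -/

import Mathlib

open Real Set Filter ENNReal

/-- The competitive Lotka–Volterra vector field. -/
def bLV (τ₁ τ₂ a b c d : ℝ) (x : ℝ × ℝ) : ℝ × ℝ :=
  (x.1 * (τ₁ - a * x.1 - c * x.2), x.2 * (τ₂ - b * x.2 - d * x.1))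

/-- Oriented angle (in `(-π, π]`) between two (nonzero) vectors of `ℝ²`,
computed as the argument of the quotient of the associated complex numbers. -/
noncomputable def oang (u v : ℝ × ℝ) : ℝ :=
  Complex.arg (({ re := v.1, im := v.2 } : ℂ) / ({ re := u.1, im := u.2 } : ℂ))

/-- `t₋(r,ε)`: first entrance time of the direction of `X r` in the cone of
half-angle `ε` around `x∞` (with values in `ℝ≥0∞`, `inf ∅ = ∞`). -/
noncomputable def tminus (X : ℝ → ℝ → ℝ × ℝ) (xinf : ℝ × ℝ) (ε r : ℝ) : ℝ≥0∞ :=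
  sInf (ENNReal.ofReal '' {s : ℝ | 0 ≤ s ∧ oang (X r s) xinf ∈ Set.Icc (-ε) ε})

/-- `t₊(r,ε)`: first exit time after `t₋(r,ε)` from the cone of half-angle `2ε`
around `x∞` (with values in `ℝ≥0∞`, `inf ∅ = ∞`). -/
noncomputable def tplus (X : ℝ → ℝ → ℝ × ℝ) (xinf : ℝ × ℝ) (ε r : ℝ) : ℝ≥0∞ :=
  sInf (ENNReal.ofReal '' {s : ℝ | 0 ≤ s ∧ tminus X xinf ε r ≤ ENNReal.ofReal s ∧
    oang (X r s) xinf ∉ Set.Icc (-(2 * ε)) (2 * ε)})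

/-!
Write `v = x₂ / x₁` for the slope of the trajectory and `F = (a - d) x₁ - (b - c) x₂`, so that
`(log v)' = τ₂ - τ₁ + F`. The sign of `F` is the side of the ray `ℝ₊ x∞` on which the point lies,
and `|F| ≥ ε min (b - c, a - d) (x₁ + x₂)` outside the cone of half-angle `ε` around that ray.

A Riccati comparison gives `x₁ + x₂ ≥ e^{-T t} S₀ / (1 + A S₀ t)`, with `S₀ = r (x₀₁ + x₀₂)`,
`T = |τ₁| + |τ₂|` and `A = a + b + c + d`. If the trajectory stayed outside the cone on `[0, δ]`,
`log v` would therefore move towards `log ((a - d) / (b - c))`, without crossing it, by at least a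
constant times `log (1 + A S₀ δ)` minus `|τ₂ - τ₁| δ`. This is impossible once `r` is large, so
`t₋(r, ε) → 0`.

On either side of the ray the competition term pushes the direction back towards `x∞`, so the
angle moves away from `x∞` at rate at most `|τ₂ - τ₁|`. Leaving the cone of half-angle `2ε` after
entering that of half-angle `ε` therefore takes time at least `ε / (|τ₂ - τ₁| + 1)`, whatever `r`.
-/

theorem sub_le_sub_of_hasDerivAt_le {f g f' g' : ℝ → ℝ} {a b : ℝ} (hab : a ≤ b)
    (hf : ∀ t ∈ Icc a b, HasDerivAt f (f' t) t) (hg : ∀ t ∈ Icc a b, HasDerivAt g (g' t) t)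
    (hle : ∀ t ∈ Icc a b, f' t ≤ g' t) : f b - f a ≤ g b - g a := by
  have hmono : MonotoneOn (fun t => g t - f t) (Icc a b) :=
    monotoneOn_of_hasDerivWithinAt_nonneg (convex_Icc a b)
      (fun t ht => ((hg t ht).sub (hf t ht)).continuousAt.continuousWithinAt)
      (fun t ht => ((hg t (interior_subset ht)).sub (hf t (interior_subset ht))).hasDerivWithinAt)
      (fun t ht => sub_nonneg.2 (hle t (interior_subset ht)))
  linarith [hmono (left_mem_Icc.2 hab) (right_mem_Icc.2 hab) hab]

theorem le_add_mul_sub_of_hasDerivAt_lt {f f' : ℝ → ℝ} {a b c κ : ℝ} (hab : a ≤ b) (hκ : 0 ≤ κ)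
    (hf : ∀ t ∈ Icc a b, HasDerivAt f (f' t) t) (ha : f a ≤ c)
    (hbound : ∀ t ∈ Icc a b, c ≤ f t → f' t < κ) : f b ≤ c + κ * (b - a) := by
  refine image_le_of_deriv_right_lt_deriv_boundary (B := fun t => c + κ * (t - a))
    (fun t ht => (hf t ht).continuousAt.continuousWithinAt)
    (fun t ht => (hf t (Ico_subset_Icc_self ht)).hasDerivWithinAt) (by simpa using ha)
    (fun t => by simpa using (((hasDerivAt_id t).sub_const a).const_mul κ).const_add c)
    (fun t ht hft => hbound t (Ico_subset_Icc_self ht) ?_) (right_mem_Icc.2 hab)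
  rw [hft]
  exact le_add_of_nonneg_right (mul_nonneg hκ (sub_nonneg.2 ht.1))

theorem abs_le_add_mul_sub_of_hasDerivAt {f f' : ℝ → ℝ} {a b c κ : ℝ} (hab : a ≤ b)
    (hκ : 0 ≤ κ) (hf : ∀ t ∈ Icc a b, HasDerivAt f (f' t) t) (ha : |f a| ≤ c)
    (hup : ∀ t ∈ Icc a b, c ≤ f t → f' t < κ) (hdown : ∀ t ∈ Icc a b, f t ≤ -c → -κ < f' t) :
    |f b| ≤ c + κ * (b - a) := by
  rw [abs_le] at ha ⊢
  have hle := le_add_mul_sub_of_hasDerivAt_lt hab hκ hf ha.2 hup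
  have hge := le_add_mul_sub_of_hasDerivAt_lt (f := fun t => -f t) (c := c) hab hκ
    (fun t ht => (hf t ht).neg)
    (by linarith) (fun t ht h => by linarith [hdown t ht (by linarith)])
  constructor <;> linarith

theorem pos_of_hasDerivAt_eq_mul {f h : ℝ → ℝ} {a b : ℝ} (hab : a ≤ b)
    (hf : ∀ t ∈ Icc a b, HasDerivAt f (f t * h t) t) (hh : ContinuousOn h (Icc a b))
    (hnn : ∀ t ∈ Icc a b, 0 ≤ f t) (ha : 0 < f a) : 0 < f b := by
  obtain ⟨K, hK⟩ := isCompact_Icc.exists_bound_of_continuousOn hh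
  have hexp (t : ℝ) : HasDerivAt (fun s => exp (K * s)) (exp (K * t) * K) t := by
    simpa using ((hasDerivAt_id t).const_mul K).exp
  -- `f t * exp (K t)` is nondecreasing since `h ≥ -K`
  have hmono := sub_le_sub_of_hasDerivAt_le hab (fun t _ => hasDerivAt_const t (0 : ℝ))
    (fun t ht => (hf t ht).mul (hexp t)) fun t ht => by
      have : 0 ≤ h t + K := by
        have := hK t ht; rw [Real.norm_eq_abs] at this; linarith [neg_abs_le (h t)]
      have := mul_nonneg (mul_nonneg (hnn t ht) (exp_pos (K * t)).le) this
      linarith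
  simp only [Pi.mul_apply] at hmono
  have : 0 < f b * exp (K * b) := by linarith [mul_pos ha (exp_pos (K * a))]
  exact (mul_pos_iff_of_pos_right (exp_pos _)).1 this

theorem forall_pos_or_forall_neg_of_continuousOn {f : ℝ → ℝ} {a b : ℝ}
    (hf : ContinuousOn f (Icc a b)) (hne : ∀ t ∈ Icc a b, f t ≠ 0) :
    (∀ t ∈ Icc a b, 0 < f t) ∨ (∀ t ∈ Icc a b, f t < 0) := by
  by_contra! ⟨⟨s, hs, hfs⟩, ⟨t, ht, hft⟩⟩
  obtain ⟨u, hu, hfu⟩ := intermediate_value_uIcc (hf.mono (uIcc_subset_Icc hs ht))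
    (show (0 : ℝ) ∈ uIcc (f s) (f t) from mem_uIcc.2 (Or.inl ⟨hfs, hft⟩))
  exact hne u (uIcc_subset_Icc hs ht hu) hfu

theorem exists_sign_lt_mul_of_continuousOn {f : ℝ → ℝ} {a b ε : ℝ} (hε : 0 ≤ ε)
    (hf : ContinuousOn f (Icc a b)) (hfar : ∀ t ∈ Icc a b, ε < |f t|) :
    ∃ σ : ℝ, (σ = 1 ∨ σ = -1) ∧ ∀ t ∈ Icc a b, ε < σ * f t := by
  rcases forall_pos_or_forall_neg_of_continuousOn hf fun t ht h => by
      have := hfar t ht; rw [h, abs_zero] at this; linarith with h | h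
  · exact ⟨1, Or.inl rfl, fun t ht => by rw [one_mul, ← abs_of_pos (h t ht)]; exact hfar t ht⟩
  · exact ⟨-1, Or.inr rfl, fun t ht => by rw [neg_one_mul, ← abs_of_neg (h t ht)]; exact hfar t ht⟩

theorem mul_log_one_add_mul_sub_le_of_le_deriv {f f' : ℝ → ℝ} {K B κ δ : ℝ} (hδ : 0 ≤ δ)
    (hB : 0 ≤ B) (hf : ∀ t ∈ Icc 0 δ, HasDerivAt f (f' t) t)
    (hf' : ∀ t ∈ Icc 0 δ, K * B / (1 + B * t) - κ ≤ f' t) :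
    K * Real.log (1 + B * δ) - κ * δ ≤ f δ - f 0 := by
  have hg (t : ℝ) (ht : t ∈ Icc 0 δ) : HasDerivAt (fun t => K * Real.log (1 + B * t) - κ * t)
      (K * B / (1 + B * t) - κ) t := by
    have hlin : HasDerivAt (fun t => 1 + B * t) B t := by
      simpa using ((hasDerivAt_id t).const_mul B).const_add 1
    have hne : 1 + B * t ≠ 0 := by
      have := ht.1
      positivity
    exact (((hlin.log hne).const_mul K).sub ((hasDerivAt_id t).const_mul κ)).congr_deriv
      (by ring)
  simpa using sub_le_sub_of_hasDerivAt_le hδ hg hf hf'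

theorem HasDerivAt.fst {y : ℝ → ℝ × ℝ} {v : ℝ × ℝ} {t : ℝ} (h : HasDerivAt y v t) :
    HasDerivAt (fun s => (y s).1) v.1 t :=
  (ContinuousLinearMap.fst ℝ ℝ ℝ).hasFDerivAt.comp_hasDerivAt t h

theorem HasDerivAt.snd {y : ℝ → ℝ × ℝ} {v : ℝ × ℝ} {t : ℝ} (h : HasDerivAt y v t) :
    HasDerivAt (fun s => (y s).2) v.2 t :=
  (ContinuousLinearMap.snd ℝ ℝ ℝ).hasFDerivAt.comp_hasDerivAt t h

theorem abs_arctan_le_abs (x : ℝ) : |arctan x| ≤ |x| := by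
  wlog hx : 0 ≤ x
  · simpa using this (-x) (by linarith)
  rw [abs_of_nonneg (arctan_nonneg.2 hx), abs_of_nonneg hx]
  simpa using le_tan (arctan_nonneg.2 hx) (arctan_lt_pi_div_two x)

theorem oang_mul_right (u w : ℝ × ℝ) {k : ℝ} (hk : 0 < k) :
    oang u (k * w.1, k * w.2) = oang u w := by
  unfold oang
  have : ({ re := k * w.1, im := k * w.2 } : ℂ) = (k : ℂ) * { re := w.1, im := w.2 } := by
    apply Complex.ext <;> simp
  rw [this, mul_div_assoc, Complex.arg_real_mul _ hk]

theorem oang_eq_arctan {u w : ℝ × ℝ} (hu₁ : 0 < u.1) (hu₂ : 0 < u.2) (hw₁ : 0 < w.1)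
    (hw₂ : 0 < w.2) :
    oang u w = arctan ((w.2 * u.1 - w.1 * u.2) / (w.1 * u.1 + w.2 * u.2)) := by
  set z : ℂ := { re := u.1, im := u.2 }
  set q : ℂ := { re := w.1, im := w.2 } / z
  have hz : 0 < Complex.normSq z := by simp only [z, Complex.normSq_mk]; positivity
  have hre : q.re = (w.1 * u.1 + w.2 * u.2) / Complex.normSq z := by
    simp only [q, z, Complex.div_re]; ring
  have him : q.im = (w.2 * u.1 - w.1 * u.2) / Complex.normSq z := by
    simp only [q, z, Complex.div_im]; ring
  have harg : |q.arg| < π / 2 :=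
    Complex.abs_arg_lt_pi_div_two_iff.2 (Or.inl (by rw [hre]; positivity))
  rw [abs_lt] at harg
  change q.arg = _
  rw [← arctan_tan harg.1 harg.2, Complex.tan_arg, hre, him,
    div_div_div_cancel_right₀ hz.ne']

theorem oang_eq_arctan_sub_arctan {u w : ℝ × ℝ} (hu₁ : 0 < u.1) (hu₂ : 0 < u.2)
    (hw₁ : 0 < w.1) (hw₂ : 0 < w.2) : oang u w = arctan (w.2 / w.1) - arctan (u.2 / u.1) := by
  have hneg : w.2 / w.1 * -(u.2 / u.1) < 1 := by
    have : 0 < w.2 / w.1 * (u.2 / u.1) := by positivity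
    linarith
  rw [oang_eq_arctan hu₁ hu₂ hw₁ hw₂, sub_eq_add_neg (arctan _),
    ← arctan_neg, arctan_add hneg]
  have hnum : w.2 / w.1 + -(u.2 / u.1) = (w.2 * u.1 - w.1 * u.2) / (w.1 * u.1) := by
    field_simp; ring
  have hden : 1 - w.2 / w.1 * -(u.2 / u.1) = (w.1 * u.1 + w.2 * u.2) / (w.1 * u.1) := by
    field_simp; ring
  rw [hnum, hden, div_div_div_cancel_right₀ (by positivity)]

theorem oang_pos_iff {u w : ℝ × ℝ} (hu₁ : 0 < u.1) (hu₂ : 0 < u.2) (hw₁ : 0 < w.1)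
    (hw₂ : 0 < w.2) : 0 < oang u w ↔ w.1 * u.2 < w.2 * u.1 := by
  rw [oang_eq_arctan_sub_arctan hu₁ hu₂ hw₁ hw₂, sub_pos, arctan_lt_arctan_iff,
    div_lt_div_iff₀ hu₁ hw₁]
  constructor <;> intro h <;> linarith

theorem oang_neg_iff {u w : ℝ × ℝ} (hu₁ : 0 < u.1) (hu₂ : 0 < u.2) (hw₁ : 0 < w.1)
    (hw₂ : 0 < w.2) : oang u w < 0 ↔ w.2 * u.1 < w.1 * u.2 := by
  rw [oang_eq_arctan_sub_arctan hu₁ hu₂ hw₁ hw₂, sub_neg, arctan_lt_arctan_iff,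
    div_lt_div_iff₀ hw₁ hu₁]
  constructor <;> intro h <;> linarith

theorem mul_lt_abs_of_lt_abs_oang {u w : ℝ × ℝ} {ε : ℝ} (hu₁ : 0 < u.1) (hu₂ : 0 < u.2)
    (hw₁ : 0 < w.1) (hw₂ : 0 < w.2) (h : ε < |oang u w|) :
    ε * (w.1 * u.1 + w.2 * u.2) < |w.2 * u.1 - w.1 * u.2| := by
  have hG : 0 < w.1 * u.1 + w.2 * u.2 := by positivity
  rw [oang_eq_arctan hu₁ hu₂ hw₁ hw₂] at h
  have := h.trans_le (abs_arctan_le_abs _)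
  rwa [abs_div, abs_of_pos hG, lt_div_iff₀ hG] at this

theorem lt_mul_sub_of_lt_mul_oang {u w : ℝ × ℝ} {ε σ : ℝ} (hu₁ : 0 < u.1) (hu₂ : 0 < u.2)
    (hw₁ : 0 < w.1) (hw₂ : 0 < w.2) (hε : 0 ≤ ε) (hσ : σ = 1 ∨ σ = -1)
    (h : ε < σ * oang u w) : ε * min w.1 w.2 * (u.1 + u.2) < σ * (w.2 * u.1 - w.1 * u.2) := by
  have hmin : min w.1 w.2 * (u.1 + u.2) ≤ w.1 * u.1 + w.2 * u.2 := by
    nlinarith [min_le_left w.1 w.2, min_le_right w.1 w.2]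
  have hsign : |w.2 * u.1 - w.1 * u.2| = σ * (w.2 * u.1 - w.1 * u.2) := by
    rcases hσ with rfl | rfl
    · have := (oang_pos_iff hu₁ hu₂ hw₁ hw₂).1 (by linarith)
      rw [abs_of_pos (by linarith), one_mul]
    · have := (oang_neg_iff hu₁ hu₂ hw₁ hw₂).1 (by linarith)
      rw [abs_of_neg (by linarith), neg_one_mul]
  have hfar : ε < |oang u w| := by
    rcases hσ with rfl | rfl
    · linarith [le_abs_self (oang u w)]
    · linarith [neg_abs_le (oang u w)]
  have := mul_lt_abs_of_lt_abs_oang hu₁ hu₂ hw₁ hw₂ hfar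
  nlinarith [mul_le_mul_of_nonneg_left hmin hε]

theorem mul_log_sub_pos_of_mul_oang_pos {u w : ℝ × ℝ} {σ : ℝ} (hu₁ : 0 < u.1) (hu₂ : 0 < u.2)
    (hw₁ : 0 < w.1) (hw₂ : 0 < w.2) (hσ : σ = 1 ∨ σ = -1) (h : 0 < σ * oang u w) :
    0 < σ * (Real.log (w.2 / w.1) - Real.log (u.2 / u.1)) := by
  rw [oang_eq_arctan_sub_arctan hu₁ hu₂ hw₁ hw₂] at h
  rcases hσ with rfl | rfl
  · simp only [one_mul, sub_pos, arctan_lt_arctan_iff] at h ⊢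
    exact Real.log_lt_log (by positivity) h
  · simp only [neg_one_mul, neg_pos, sub_neg, arctan_lt_arctan_iff] at h ⊢
    exact Real.log_lt_log (by positivity) h

theorem exists_mem_le_of_sInf_ofReal_le {E : Set ℝ} {s : ℝ} (hE : IsClosed E)
    (hE0 : ∀ x ∈ E, 0 ≤ x) (hs : 0 ≤ s) (h : sInf (ENNReal.ofReal '' E) ≤ ENNReal.ofReal s) :
    ∃ m ∈ E, m ≤ s := by
  have hne : E.Nonempty := by
    by_contra hE'
    simp [not_nonempty_iff_eq_empty.1 hE'] at h
  have hbdd : BddBelow E := ⟨0, hE0⟩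
  refine ⟨sInf E, hE.csInf_mem hne hbdd, ?_⟩
  rw [← ENNReal.ofReal_le_ofReal_iff hs]
  refine le_trans (le_sInf ?_) h
  rintro _ ⟨x, hx, rfl⟩
  exact ENNReal.ofReal_le_ofReal (csInf_le hbdd hx)

theorem tminus_le_ofReal {X : ℝ → ℝ → ℝ × ℝ} {xinf : ℝ × ℝ} {ε r s : ℝ} (hs : 0 ≤ s)
    (h : oang (X r s) xinf ∈ Icc (-ε) ε) : tminus X xinf ε r ≤ ENNReal.ofReal s :=
  sInf_le ⟨s, ⟨hs, h⟩, rfl⟩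

theorem tendsto_tminus_zero {X : ℝ → ℝ → ℝ × ℝ} {xinf : ℝ × ℝ} {ε : ℝ} {l : Filter ℝ}
    (h : ∀ δ, 0 < δ → ∀ᶠ r in l, ∃ s ∈ Icc 0 δ, oang (X r s) xinf ∈ Icc (-ε) ε) :
    Tendsto (tminus X xinf ε) l (nhds 0) := by
  refine ENNReal.tendsto_nhds_zero.2 fun η hη => ?_
  obtain ⟨δ, -, hδ, hδη⟩ := ENNReal.lt_iff_exists_real_btwn.1 hη
  filter_upwards [h δ (ENNReal.ofReal_pos.1 hδ)] with r ⟨s, hs, hmem⟩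
  exact (tminus_le_ofReal hs.1 hmem).trans ((ENNReal.ofReal_le_ofReal hs.2).trans hδη.le)

theorem ofReal_le_tplus {X : ℝ → ℝ → ℝ × ℝ} {xinf : ℝ × ℝ} {ε r θ : ℝ}
    (hclosed : IsClosed {s : ℝ | 0 ≤ s ∧ oang (X r s) xinf ∈ Icc (-ε) ε})
    (h : ∀ m s, 0 ≤ m → m ≤ s → oang (X r m) xinf ∈ Icc (-ε) ε →
      oang (X r s) xinf ∉ Icc (-(2 * ε)) (2 * ε) → θ ≤ s) :
    ENNReal.ofReal θ ≤ tplus X xinf ε r := by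
  refine le_sInf ?_
  rintro _ ⟨s, ⟨hs, hentered, hout⟩, rfl⟩
  obtain ⟨m, ⟨hm, hmem⟩, hms⟩ :=
    exists_mem_le_of_sInf_ofReal_le hclosed (fun x hx => hx.1) hs hentered
  exact ENNReal.ofReal_le_ofReal (h m s hm hms hmem hout)

theorem tminus_mul_right (X : ℝ → ℝ → ℝ × ℝ) (w : ℝ × ℝ) {k : ℝ} (hk : 0 < k) (ε : ℝ) :
    tminus X (k * w.1, k * w.2) ε = tminus X w ε := by
  funext r
  simp only [tminus, oang_mul_right _ _ hk]

theorem tplus_mul_right (X : ℝ → ℝ → ℝ × ℝ) (w : ℝ × ℝ) {k : ℝ} (hk : 0 < k) (ε : ℝ) :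
    tplus X (k * w.1, k * w.2) ε = tplus X w ε := by
  funext r
  simp only [tplus, tminus_mul_right X w hk, oang_mul_right _ _ hk]

theorem neg_one_div_one_add_sq_mul_lt {v Δ F : ℝ} (hv : 0 < v) (hF : 0 ≤ F) :
    -(1 / (1 + v ^ 2) * (v * (Δ + F))) < |Δ| + 1 := by
  rw [one_div_mul_eq_div, ← neg_div, div_lt_iff₀ (by positivity)]
  nlinarith [neg_abs_le Δ, abs_nonneg Δ, mul_nonneg hv.le hF, sq_nonneg (v - 1),
    mul_nonneg (abs_nonneg Δ) (sq_nonneg (v - 1))]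

section LotkaVolterra

variable {τ₁ τ₂ a b c d : ℝ} {y : ℝ → ℝ × ℝ}

theorem lv_pos (hy : ∀ t, 0 ≤ t → HasDerivAt y (bLV τ₁ τ₂ a b c d (y t)) t)
    (hnn : ∀ t, 0 ≤ t → 0 ≤ (y t).1 ∧ 0 ≤ (y t).2) (h0 : 0 < (y 0).1 ∧ 0 < (y 0).2)
    {t : ℝ} (ht : 0 ≤ t) : 0 < (y t).1 ∧ 0 < (y t).2 := by
  have hyc : ContinuousOn y (Icc 0 t) := fun s hs =>
    (hy s hs.1).continuousAt.continuousWithinAt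
  exact ⟨pos_of_hasDerivAt_eq_mul (h := fun s => τ₁ - a * (y s).1 - c * (y s).2) ht
      (fun s hs => (hy s hs.1).fst) (by fun_prop) (fun s hs => (hnn s hs.1).1) h0.1,
    pos_of_hasDerivAt_eq_mul (h := fun s => τ₂ - b * (y s).2 - d * (y s).1) ht
      (fun s hs => (hy s hs.1).snd) (by fun_prop) (fun s hs => (hnn s hs.1).2) h0.2⟩

theorem hasDerivAt_lv_ratio {t : ℝ} (hy : HasDerivAt y (bLV τ₁ τ₂ a b c d (y t)) t)
    (h₁ : 0 < (y t).1) :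
    HasDerivAt (fun s => (y s).2 / (y s).1)
      ((y t).2 / (y t).1 * (τ₂ - τ₁ + ((a - d) * (y t).1 - (b - c) * (y t).2))) t := by
  refine (hy.snd.fun_div hy.fst h₁.ne').congr_deriv ?_
  simp only [bLV]
  field_simp
  ring

theorem bLV_fst_add_snd_ge (ha : 0 ≤ a) (hb : 0 ≤ b) (hc : 0 ≤ c) (hd : 0 ≤ d) {u : ℝ × ℝ}
    (hu₁ : 0 ≤ u.1) (hu₂ : 0 ≤ u.2) :
    -(|τ₁| + |τ₂|) * (u.1 + u.2) - (a + b + c + d) * (u.1 + u.2) ^ 2 ≤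
      (bLV τ₁ τ₂ a b c d u).1 + (bLV τ₁ τ₂ a b c d u).2 := by
  simp only [bLV]
  nlinarith [mul_nonneg (neg_le_iff_add_nonneg.1 (neg_abs_le τ₁)) hu₁,
    mul_nonneg (neg_le_iff_add_nonneg.1 (neg_abs_le τ₂)) hu₂,
    mul_nonneg (abs_nonneg τ₁) hu₂, mul_nonneg (abs_nonneg τ₂) hu₁,
    mul_nonneg (add_nonneg hb (add_nonneg hc hd)) (sq_nonneg u.1),
    mul_nonneg (add_nonneg ha (add_nonneg hc hd)) (sq_nonneg u.2),
    mul_nonneg (add_nonneg ha hb) (mul_nonneg hu₁ hu₂),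
    mul_nonneg (add_nonneg hc hd) (mul_nonneg hu₁ hu₂)]

theorem lv_sum_lower_bound (ha : 0 ≤ a) (hb : 0 ≤ b) (hc : 0 ≤ c) (hd : 0 ≤ d)
    (hy : ∀ t, 0 ≤ t → HasDerivAt y (bLV τ₁ τ₂ a b c d (y t)) t)
    (hpos : ∀ t, 0 ≤ t → 0 < (y t).1 ∧ 0 < (y t).2) {t : ℝ} (ht : 0 ≤ t) :
    exp (-(|τ₁| + |τ₂|) * t) * ((y 0).1 + (y 0).2) /
        (1 + (a + b + c + d) * ((y 0).1 + (y 0).2) * t) ≤ (y t).1 + (y t).2 := by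
  set T := |τ₁| + |τ₂|
  set A := a + b + c + d
  set S : ℝ → ℝ := fun s => (y s).1 + (y s).2
  set S' : ℝ → ℝ := fun s => (bLV τ₁ τ₂ a b c d (y s)).1 + (bLV τ₁ τ₂ a b c d (y s)).2
  have hS (s : ℝ) (hs : 0 ≤ s) : 0 < S s := add_pos (hpos s hs).1 (hpos s hs).2
  have hg (s : ℝ) (hs : s ∈ Icc 0 t) : HasDerivAt (fun s => exp (-T * s) * (S s)⁻¹)
      (exp (-T * s) * -T * (S s)⁻¹ + exp (-T * s) * (-S' s / S s ^ 2)) s := by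
    have hexp : HasDerivAt (fun s => exp (-T * s)) (exp (-T * s) * -T) s := by
      simpa using ((hasDerivAt_id s).const_mul (-T)).exp
    exact hexp.mul (((hy s hs.1).fst.add (hy s hs.1).snd).inv (hS s hs.1).ne')
  have hrate (s : ℝ) (hs : s ∈ Icc 0 t) :
      exp (-T * s) * -T * (S s)⁻¹ + exp (-T * s) * (-S' s / S s ^ 2) ≤ A := by
    have hSs := hS s hs.1
    have hriccati := bLV_fst_add_snd_ge (τ₁ := τ₁) (τ₂ := τ₂) ha hb hc hd
      (hpos s hs.1).1.le (hpos s hs.1).2.le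
    have hexp_le : exp (-T * s) ≤ 1 :=
      exp_le_one_iff.2 (by nlinarith [abs_nonneg τ₁, abs_nonneg τ₂, hs.1])
    have heq : exp (-T * s) * -T * (S s)⁻¹ + exp (-T * s) * (-S' s / S s ^ 2) =
        exp (-T * s) * ((-T * S s - S' s) / S s ^ 2) := by
      field_simp
      ring
    have hq : (-T * S s - S' s) / S s ^ 2 ≤ A := by
      rw [div_le_iff₀ (by positivity)]
      linarith
    rw [heq]
    calc exp (-T * s) * ((-T * S s - S' s) / S s ^ 2) ≤ exp (-T * s) * A :=
          mul_le_mul_of_nonneg_left hq (exp_pos _).le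
      _ ≤ A := mul_le_of_le_one_left (by positivity) hexp_le
  have hcmp := sub_le_sub_of_hasDerivAt_le ht hg (fun s _ => hasDerivAt_mul_const A) hrate
  simp only [mul_zero, exp_zero, one_mul] at hcmp
  have hS₀ := hS 0 le_rfl
  have hSt := hS t ht
  change exp (-T * t) * S 0 / (1 + A * S 0 * t) ≤ S t
  rw [div_le_iff₀ (by positivity)]
  have h₁ : exp (-T * t) * (S t)⁻¹ * (S t * S 0) = exp (-T * t) * S 0 := by field_simp
  have h₂ : (S 0)⁻¹ * (S t * S 0) = S t := by field_simp
  nlinarith [mul_le_mul_of_nonneg_right hcmp (mul_pos hSt hS₀).le]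

theorem lv_log_ratio_drift (ha : 0 ≤ a) (hb : 0 ≤ b) (hc : 0 ≤ c) (hd : 0 ≤ d)
    (hA : 0 < a + b + c + d) {δ k σ : ℝ} (hδ : 0 ≤ δ) (hk : 0 ≤ k) (hσ : |σ| ≤ 1)
    (hy : ∀ t, 0 ≤ t → HasDerivAt y (bLV τ₁ τ₂ a b c d (y t)) t)
    (hpos : ∀ t, 0 ≤ t → 0 < (y t).1 ∧ 0 < (y t).2)
    (hF : ∀ t ∈ Icc 0 δ,
      k * ((y t).1 + (y t).2) ≤ σ * ((a - d) * (y t).1 - (b - c) * (y t).2)) :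
    k * exp (-(|τ₁| + |τ₂|) * δ) / (a + b + c + d) *
        Real.log (1 + (a + b + c + d) * ((y 0).1 + (y 0).2) * δ) - |τ₂ - τ₁| * δ ≤
      σ * (Real.log ((y δ).2 / (y δ).1) - Real.log ((y 0).2 / (y 0).1)) := by
  set T := |τ₁| + |τ₂|
  set A := a + b + c + d
  set S₀ := (y 0).1 + (y 0).2
  have hS₀ : 0 < S₀ := add_pos (hpos 0 le_rfl).1 (hpos 0 le_rfl).2
  have hratio (t : ℝ) (ht : t ∈ Icc 0 δ) : HasDerivAt (fun t => σ * Real.log ((y t).2 / (y t).1))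
      (σ * (τ₂ - τ₁ + ((a - d) * (y t).1 - (b - c) * (y t).2))) t := by
    obtain ⟨h₁, h₂⟩ := hpos t ht.1
    refine ((hasDerivAt_lv_ratio (hy t ht.1) h₁).log (by positivity)).const_mul σ
      |>.congr_deriv ?_
    field_simp
  have hrate (t : ℝ) (ht : t ∈ Icc 0 δ) :
      k * exp (-T * δ) / A * (A * S₀) / (1 + A * S₀ * t) - |τ₂ - τ₁| ≤
        σ * (τ₂ - τ₁ + ((a - d) * (y t).1 - (b - c) * (y t).2)) := by
    have hden : 0 < 1 + A * S₀ * t := by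
      have := ht.1
      positivity
    have hS : k * exp (-T * δ) / A * (A * S₀) / (1 + A * S₀ * t) ≤ k * ((y t).1 + (y t).2) :=
      calc k * exp (-T * δ) / A * (A * S₀) / (1 + A * S₀ * t)
          = k * (exp (-T * δ) * S₀ / (1 + A * S₀ * t)) := by field_simp
        _ ≤ k * (exp (-T * t) * S₀ / (1 + A * S₀ * t)) := by
            have : exp (-T * δ) ≤ exp (-T * t) :=
              exp_le_exp.2 (by nlinarith [ht.2, abs_nonneg τ₁, abs_nonneg τ₂])
            gcongr
        _ ≤ k * ((y t).1 + (y t).2) :=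
            mul_le_mul_of_nonneg_left (lv_sum_lower_bound ha hb hc hd hy hpos ht.1) hk
    have hσΔ : -|τ₂ - τ₁| ≤ σ * (τ₂ - τ₁) := by
      have : |σ * (τ₂ - τ₁)| ≤ |τ₂ - τ₁| := by
        rw [abs_mul]
        exact mul_le_of_le_one_left (abs_nonneg _) hσ
      linarith [neg_abs_le (σ * (τ₂ - τ₁))]
    linarith [hF t ht, mul_add σ (τ₂ - τ₁) ((a - d) * (y t).1 - (b - c) * (y t).2)]
  have := mul_log_one_add_mul_sub_le_of_le_deriv hδ (by positivity) hratio hrate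
  rw [mul_sub]
  linarith

theorem lv_exists_oang_mem_Icc (ha : 0 ≤ a) (hb : 0 ≤ b) (hc : 0 ≤ c) (hd : 0 ≤ d)
    (had : d < a) (hbc : c < b)
    (hy : ∀ t, 0 ≤ t → HasDerivAt y (bLV τ₁ τ₂ a b c d (y t)) t)
    (hpos : ∀ t, 0 ≤ t → 0 < (y t).1 ∧ 0 < (y t).2) {δ ε : ℝ} (hδ : 0 < δ) (hε : 0 < ε)
    (hlarge : |τ₂ - τ₁| * δ + |Real.log ((a - d) / (b - c)) - Real.log ((y 0).2 / (y 0).1)| <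
      ε * min (b - c) (a - d) * exp (-(|τ₁| + |τ₂|) * δ) / (a + b + c + d) *
        Real.log (1 + (a + b + c + d) * ((y 0).1 + (y 0).2) * δ)) :
    ∃ s ∈ Icc 0 δ, oang (y s) (b - c, a - d) ∈ Icc (-ε) ε := by
  have hp : 0 < b - c := sub_pos.2 hbc
  have hq : 0 < a - d := sub_pos.2 had
  have hcont : ContinuousOn (fun t => oang (y t) (b - c, a - d)) (Icc 0 δ) := by
    refine ContinuousOn.congr (fun t ht => ?_) fun t ht =>
      oang_eq_arctan_sub_arctan (hpos t ht.1).1 (hpos t ht.1).2 hp hq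
    exact ((hasDerivAt_lv_ratio (hy t ht.1) (hpos t ht.1).1).arctan.const_sub _).continuousAt
      |>.continuousWithinAt
  by_contra! hout
  obtain ⟨σ, hσ, hfar⟩ := exists_sign_lt_mul_of_continuousOn hε.le hcont fun t ht =>
    not_le.1 fun h => hout t ht (abs_le.1 h)
  have hσ₁ : |σ| = 1 := by rcases hσ with rfl | rfl <;> simp
  have hmove := lv_log_ratio_drift ha hb hc hd (by linarith) hδ.le (by positivity) hσ₁.le hy hpos
    fun t ht => (lt_mul_sub_of_lt_mul_oang (hpos t ht.1).1 (hpos t ht.1).2 hp hq hε.le hσ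
      (hfar t ht)).le
  have hend := mul_log_sub_pos_of_mul_oang_pos (hpos δ hδ.le).1 (hpos δ hδ.le).2 hp hq hσ
    (hε.trans (hfar δ (right_mem_Icc.2 hδ.le)))
  have hbound := le_abs_self (σ * (Real.log ((a - d) / (b - c)) - Real.log ((y 0).2 / (y 0).1)))
  rw [abs_mul, hσ₁, one_mul] at hbound
  dsimp only at hend
  linarith [mul_sub σ (Real.log ((a - d) / (b - c))) (Real.log ((y 0).2 / (y 0).1)),
    mul_sub σ (Real.log ((a - d) / (b - c))) (Real.log ((y δ).2 / (y δ).1)),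
    mul_sub σ (Real.log ((y δ).2 / (y δ).1)) (Real.log ((y 0).2 / (y 0).1))]

theorem lv_angle_deriv_lt (had : d < a) (hbc : c < b) {u : ℝ × ℝ} {σ : ℝ} (hu₁ : 0 < u.1)
    (hu₂ : 0 < u.2) (hσ : σ = 1 ∨ σ = -1) (h : 0 < σ * oang u (b - c, a - d)) :
    σ * -(1 / (1 + (u.2 / u.1) ^ 2) *
      (u.2 / u.1 * (τ₂ - τ₁ + ((a - d) * u.1 - (b - c) * u.2)))) < |τ₂ - τ₁| + 1 := by
  have hF := lt_mul_sub_of_lt_mul_oang hu₁ hu₂ (sub_pos.2 hbc) (sub_pos.2 had) le_rfl hσ h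
  simp only [zero_mul] at hF
  have hΔ : |σ * (τ₂ - τ₁)| = |τ₂ - τ₁| := by
    rcases hσ with rfl | rfl <;> simp [abs_sub_comm]
  rw [← hΔ]
  refine (le_of_eq ?_).trans_lt (neg_one_div_one_add_sq_mul_lt (div_pos hu₂ hu₁) hF.le)
  ring

theorem lv_ofReal_le_tplus (had : d < a) (hbc : c < b) {X : ℝ → ℝ → ℝ × ℝ} {r ε : ℝ}
    (hε : 0 < ε) (hy : ∀ t, 0 ≤ t → HasDerivAt (X r) (bLV τ₁ τ₂ a b c d (X r t)) t)
    (hpos : ∀ t, 0 ≤ t → 0 < (X r t).1 ∧ 0 < (X r t).2) :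
    ENNReal.ofReal (ε / (|τ₂ - τ₁| + 1)) ≤ tplus X (b - c, a - d) ε r := by
  set κ := |τ₂ - τ₁| + 1
  have hκ : 0 < κ := by positivity
  set ω : ℝ → ℝ := fun t => arctan ((a - d) / (b - c)) - arctan ((X r t).2 / (X r t).1)
  have hoang (t : ℝ) (ht : 0 ≤ t) : oang (X r t) (b - c, a - d) = ω t :=
    oang_eq_arctan_sub_arctan (hpos t ht).1 (hpos t ht).2 (sub_pos.2 hbc) (sub_pos.2 had)
  have hω (t : ℝ) (ht : 0 ≤ t) : HasDerivAt ω (-(1 / (1 + ((X r t).2 / (X r t).1) ^ 2) *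
      ((X r t).2 / (X r t).1 * (τ₂ - τ₁ + ((a - d) * (X r t).1 - (b - c) * (X r t).2))))) t :=
    ((hasDerivAt_lv_ratio (hy t ht) (hpos t ht).1).arctan).const_sub _
  refine ofReal_le_tplus ?_ fun m s hm hms hmem hout => ?_
  · have : {s : ℝ | 0 ≤ s ∧ oang (X r s) (b - c, a - d) ∈ Icc (-ε) ε} =
        Ici 0 ∩ ω ⁻¹' Icc (-ε) ε := by
      ext s
      exact and_congr_right fun hs => by rw [hoang s hs]; rfl
    rw [this]
    exact ContinuousOn.preimage_isClosed_of_isClosed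
      (fun t ht => (hω t ht).continuousAt.continuousWithinAt) isClosed_Ici isClosed_Icc
  have hbarrier := abs_le_add_mul_sub_of_hasDerivAt (c := ε) hms hκ.le
    (fun t ht => hω t (hm.trans ht.1)) (abs_le.2 (hoang m hm ▸ hmem))
    (fun t ht hωt => by
      obtain ⟨h₁, h₂⟩ := hpos t (hm.trans ht.1)
      have := lv_angle_deriv_lt (τ₁ := τ₁) (τ₂ := τ₂) had hbc h₁ h₂
        (Or.inl rfl) (by rw [one_mul, hoang t (hm.trans ht.1)]; linarith)
      linarith)
    (fun t ht hωt => by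
      obtain ⟨h₁, h₂⟩ := hpos t (hm.trans ht.1)
      have := lv_angle_deriv_lt (τ₁ := τ₁) (τ₂ := τ₂) had hbc h₁ h₂
        (Or.inr rfl) (by rw [neg_one_mul, hoang t (hm.trans ht.1)]; linarith)
      linarith)
  rw [hoang s (hm.trans hms)] at hout
  have hfar : 2 * ε < |ω s| := not_le.1 fun h => hout (abs_le.1 h)
  rw [div_le_iff₀ hκ]
  nlinarith

theorem lv_eventually_exists_oang_mem_Icc (ha : 0 ≤ a) (hb : 0 ≤ b) (hc : 0 ≤ c) (hd : 0 ≤ d)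
    (had : d < a) (hbc : c < b) {x₀ : ℝ × ℝ} (hx₀ : 0 < x₀.1 ∧ 0 < x₀.2)
    {X : ℝ → ℝ → ℝ × ℝ} (hX0 : ∀ r : ℝ, 0 < r → X r 0 = (r * x₀.1, r * x₀.2))
    (hXder : ∀ r : ℝ, 0 < r → ∀ t : ℝ, 0 ≤ t → HasDerivAt (X r) (bLV τ₁ τ₂ a b c d (X r t)) t)
    (hpos : ∀ r : ℝ, 0 < r → ∀ t : ℝ, 0 ≤ t → 0 < (X r t).1 ∧ 0 < (X r t).2)
    {ε δ : ℝ} (hε : 0 < ε) (hδ : 0 < δ) :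
    ∀ᶠ r in atTop, ∃ s ∈ Icc 0 δ, oang (X r s) (b - c, a - d) ∈ Icc (-ε) ε := by
  have hmin : 0 < min (b - c) (a - d) := lt_min (sub_pos.2 hbc) (sub_pos.2 had)
  have hA : 0 < a + b + c + d := by linarith
  have hK : 0 < ε * min (b - c) (a - d) * exp (-(|τ₁| + |τ₂|) * δ) / (a + b + c + d) :=
    div_pos (by positivity) hA
  have hgrow : Tendsto (fun r => 1 + (a + b + c + d) * (r * (x₀.1 + x₀.2)) * δ) atTop atTop :=
    tendsto_atTop_add_const_left _ 1 <| ((tendsto_id.atTop_mul_const (by linarith [hx₀.1, hx₀.2])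
      ).const_mul_atTop (by positivity)).atTop_mul_const hδ
  filter_upwards [((tendsto_log_atTop.comp hgrow).const_mul_atTop hK).eventually_gt_atTop
      (|τ₂ - τ₁| * δ + |Real.log ((a - d) / (b - c)) - Real.log (x₀.2 / x₀.1)|),
    eventually_gt_atTop 0] with r hlarge hr
  refine lv_exists_oang_mem_Icc ha hb hc hd had hbc (hXder r hr) (hpos r hr) hδ hε ?_
  rw [hX0 r hr]
  simpa only [mul_div_mul_left _ _ hr.ne', ← mul_add, Function.comp_apply] using hlarge

end LotkaVolterra

/-- When `a > d` and `b > c`, the flow started from `r·x₀` finds the direction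
`x∞` in a time vanishing as `r → ∞`, and keeps it for a non-vanishing time. -/
theorem stmt5 (τ₁ τ₂ a b c d : ℝ) (ha : 0 < a) (hb : 0 < b) (hc : 0 < c) (hd : 0 < d)
    (had : d < a) (hbc : c < b)
    (x₀ : ℝ × ℝ) (hx₀ : 0 < x₀.1 ∧ 0 < x₀.2)
    (X : ℝ → ℝ → ℝ × ℝ)
    (hX0 : ∀ r : ℝ, 0 < r → X r 0 = (r * x₀.1, r * x₀.2))
    (hXmem : ∀ r : ℝ, 0 < r → ∀ t : ℝ, 0 ≤ t → 0 ≤ (X r t).1 ∧ 0 ≤ (X r t).2)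
    (hXder : ∀ r : ℝ, 0 < r → ∀ t : ℝ, 0 ≤ t →
      HasDerivAt (X r) (bLV τ₁ τ₂ a b c d (X r t)) t)
    (ε : ℝ) (hε : 0 < ε) :
    Filter.Tendsto
        (fun r => tminus X ((b - c) / (a * b - c * d), (a - d) / (a * b - c * d)) ε r)
        Filter.atTop (nhds 0) ∧
      0 < Filter.liminf
        (fun r => tplus X ((b - c) / (a * b - c * d), (a - d) / (a * b - c * d)) ε r)
        Filter.atTop := by
  have hD : 0 < a * b - c * d := by nlinarith
  have hpos (r : ℝ) (hr : 0 < r) (t : ℝ) (ht : 0 ≤ t) : 0 < (X r t).1 ∧ 0 < (X r t).2 :=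
    lv_pos (hXder r hr) (hXmem r hr)
      (by rw [hX0 r hr]; exact ⟨mul_pos hr hx₀.1, mul_pos hr hx₀.2⟩) ht
  have hxinf : ((b - c) / (a * b - c * d), (a - d) / (a * b - c * d)) =
      ((a * b - c * d)⁻¹ * (b - c, a - d).1, (a * b - c * d)⁻¹ * (b - c, a - d).2) := by
    simp only [div_eq_inv_mul]
  rw [hxinf, tminus_mul_right X _ (inv_pos.2 hD), tplus_mul_right X _ (inv_pos.2 hD)]
  refine ⟨tendsto_tminus_zero fun δ hδ =>
    lv_eventually_exists_oang_mem_Icc ha.le hb.le hc.le hd.le had hbc hx₀ hX0 hXder hpos hε hδ, ?_⟩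
  refine (ENNReal.ofReal_pos.2 (div_pos hε (by positivity : (0 : ℝ) < |τ₂ - τ₁| + 1))).trans_le
    (le_liminf_of_le (by isBoundedDefault) ?_)
  filter_upwards [eventually_gt_atTop 0] with r hr
  exact lv_ofReal_le_tplus had hbc hε (hXder r hr) (hpos r hr)
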